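/- arXiv:1502.02598 — 2 statements merged into one kernel-verified Lean document; each statement's English description precedes it below -/
import Mathlib

section
/- Let Gamma be a finite subset of N^2 and lambda_Gamma(z,w) be the minimal eigenvalue of the complex Hessian H_{phi_Gamma}(z,w). Then there exist constants 0 < c <= C depending only on Gamma such that c * phi_{Gamma^{(1)}}(z,w) <= lambda_Gamma(z,w) * phi_{Gamma^{(2)}}(z,w) <= C * phi_{Gamma^{(1)}}(z,w) for all (z,w) in C^2. -/
/-- Wirtinger derivative `∂/∂z` (first coordinate) of a function on `ℂ²`. -/
noncomputable def dz (f : ℂ × ℂ → ℂ) (p : ℂ × ℂ) : ℂ :=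
  (1 / 2) * (fderiv ℝ f p (1, 0) - Complex.I * fderiv ℝ f p (Complex.I, 0))

/-- Wirtinger derivative `∂/∂z̄` (first coordinate). -/
noncomputable def dzbar (f : ℂ × ℂ → ℂ) (p : ℂ × ℂ) : ℂ :=
  (1 / 2) * (fderiv ℝ f p (1, 0) + Complex.I * fderiv ℝ f p (Complex.I, 0))

/-- Wirtinger derivative `∂/∂w` (second coordinate). -/
noncomputable def dw (f : ℂ × ℂ → ℂ) (p : ℂ × ℂ) : ℂ :=
  (1 / 2) * (fderiv ℝ f p (0, 1) - Complex.I * fderiv ℝ f p (0, Complex.I))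

/-- Wirtinger derivative `∂/∂w̄` (second coordinate). -/
noncomputable def dwbar (f : ℂ × ℂ → ℂ) (p : ℂ × ℂ) : ℂ :=
  (1 / 2) * (fderiv ℝ f p (0, 1) + Complex.I * fderiv ℝ f p (0, Complex.I))

/-- The model monomial weight `φ_Γ(z,w) = ∑_{(α,β)∈Γ} |z|^{2α} |w|^{2β}`. -/
noncomputable def phiGamma (Γ : Finset (ℕ × ℕ)) (p : ℂ × ℂ) : ℝ :=
  ∑ q ∈ Γ, ‖p.1‖ ^ (2 * q.1) * ‖p.2‖ ^ (2 * q.2)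

/-- `Γ⁽¹⁾ = {(α,β)+(γ,δ) : (α,β),(γ,δ) ∈ Γ linearly independent} - (1,1)`. -/
def GammaOne (Γ : Finset (ℕ × ℕ)) : Finset (ℕ × ℕ) :=
  ((Γ ×ˢ Γ).filter (fun q => q.1.1 * q.2.2 ≠ q.1.2 * q.2.1)).image
    (fun q => (q.1.1 + q.2.1 - 1, q.1.2 + q.2.2 - 1))

/-- `Γ⁽²⁾ = (Γ_r - (1,0)) ∪ (Γ_u - (0,1))`. -/
def GammaTwo (Γ : Finset (ℕ × ℕ)) : Finset (ℕ × ℕ) :=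
  (Γ.filter (fun q => q.1 ≠ 0)).image (fun q => (q.1 - 1, q.2)) ∪
    (Γ.filter (fun q => q.2 ≠ 0)).image (fun q => (q.1, q.2 - 1))

/-- The determinant of the complex Hessian of `φ_Γ` (a real number). -/
noncomputable def detHessian (Γ : Finset (ℕ × ℕ)) (p : ℂ × ℂ) : ℝ :=
  letI φC : ℂ × ℂ → ℂ := fun q => (phiGamma Γ q : ℂ)
  (dz (dzbar φC) p * dw (dwbar φC) p - dz (dwbar φC) p * dw (dzbar φC) p).re

/-- The trace of the complex Hessian of `φ_Γ` (a real number). -/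
noncomputable def trHessian (Γ : Finset (ℕ × ℕ)) (p : ℂ × ℂ) : ℝ :=
  letI φC : ℂ × ℂ → ℂ := fun q => (phiGamma Γ q : ℂ)
  (dz (dzbar φC) p + dw (dwbar φC) p).re

/-- The value of the Hermitian form of the complex Hessian of `φ_Γ` at `p` on the
vector `v`, i.e. `(H_{φ_Γ}(p) v, v) = ∑_{j,k} ∂²φ/∂z_j∂z̄_k v_j v̄_k`. -/
noncomputable def hessForm (Γ : Finset (ℕ × ℕ)) (p : ℂ × ℂ) (v : ℂ × ℂ) : ℝ :=
  letI φC : ℂ × ℂ → ℂ := fun q => (phiGamma Γ q : ℂ)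
  (dz (dzbar φC) p * v.1 * (starRingEnd ℂ) v.1
    + dz (dwbar φC) p * v.1 * (starRingEnd ℂ) v.2
    + dw (dzbar φC) p * v.2 * (starRingEnd ℂ) v.1
    + dw (dwbar φC) p * v.2 * (starRingEnd ℂ) v.2).re

/-- The least eigenvalue `λ_Γ` of the complex Hessian of `φ_Γ`, as the infimum of the
Rayleigh quotient. -/
noncomputable def lamGamma (Γ : Finset (ℕ × ℕ)) (p : ℂ × ℂ) : ℝ :=
  sInf {r : ℝ | ∃ v : ℂ × ℂ, v ≠ 0 ∧ r = hessForm Γ p v / (‖v.1‖ ^ 2 + ‖v.2‖ ^ 2)}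

/-!
Write `x = |z|²`, `y = |w|²`. Differentiating the monomials `z^a z̄^b w^c w̄^d` shows that the
complex Hessian of `φ_Γ` is `[[A, z̄ w E], [z w̄ E, D]]` with `A`, `D`, `E` explicit polynomials
in `x, y`. A Lagrange-type identity writes `2 det = ∑ (αδ - βγ)² x^(α+γ-1) y^(β+δ-1)` over pairs of
exponents in `Γ`, so `det ≈ φ_{Γ⁽¹⁾}`, while `tr = A + D ≈ φ_{Γ⁽²⁾}`. For a nonnegative `2 × 2`
Hermitian matrix the least eigenvalue satisfies `det ≤ λ · tr ≤ 2 det`, whence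
`λ φ_{Γ⁽²⁾} ≈ λ · tr ≈ det ≈ φ_{Γ⁽¹⁾}`.
-/

open Complex ComplexConjugate

/-- The Hermitian form `⟨Hv, v⟩` of the matrix `H = [[a, u], [ū, d]]`. -/
noncomputable def hermForm (a d : ℝ) (u : ℂ) (v : ℂ × ℂ) : ℝ :=
  a * ‖v.1‖ ^ 2 + d * ‖v.2‖ ^ 2 + 2 * (u * v.1 * conj v.2).re

noncomputable def hermMinEigenvalue (a d : ℝ) (u : ℂ) : ℝ :=
  (a + d - √((a - d) ^ 2 + 4 * ‖u‖ ^ 2)) / 2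

section Hermitian

variable {a d : ℝ} {u : ℂ}

lemma hermForm_nonneg (ha : 0 ≤ a) (hd : 0 ≤ d) (hu : ‖u‖ ^ 2 ≤ a * d) (v : ℂ × ℂ) :
    0 ≤ hermForm a d u v := by
  have hre : -(‖u‖ * ‖v.1‖ * ‖v.2‖) ≤ (u * v.1 * conj v.2).re := by
    have := neg_abs_le (u * v.1 * conj v.2).re
    have := abs_re_le_norm (u * v.1 * conj v.2)
    rw [norm_mul, norm_mul, RCLike.norm_conj] at this
    linarith
  have hsq : (‖u‖ * (‖v.1‖ * ‖v.2‖)) ^ 2 ≤ (a * ‖v.1‖ ^ 2) * (d * ‖v.2‖ ^ 2) := by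
    rw [mul_pow, mul_pow]
    nlinarith [sq_nonneg (‖v.1‖ * ‖v.2‖)]
  have hamgm : 2 * (‖u‖ * (‖v.1‖ * ‖v.2‖)) ≤ a * ‖v.1‖ ^ 2 + d * ‖v.2‖ ^ 2 :=
    le_of_pow_le_pow_left₀ two_ne_zero (by positivity)
      (by nlinarith [sq_nonneg (a * ‖v.1‖ ^ 2 - d * ‖v.2‖ ^ 2)])
  unfold hermForm
  nlinarith

lemma exists_hermForm_eq_zero (hu : ‖u‖ ^ 2 = a * d) : ∃ v ≠ 0, hermForm a d u v = 0 := by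
  rcases eq_or_ne a 0 with rfl | ha
  · exact ⟨(1, 0), by simp, by simp [hermForm]⟩
  · refine ⟨(conj u, -a), by simp [ha], ?_⟩
    have : (u * conj u * conj (-(a : ℂ))).re = -a * ‖u‖ ^ 2 := by
      rw [mul_conj', map_neg, conj_ofReal]
      norm_cast
      ring
    simp only [hermForm, RCLike.norm_conj, norm_neg, norm_real, Real.norm_eq_abs, sq_abs, this]
    linear_combination (-a) * hu

lemma hermForm_sub_mul (μ : ℝ) (v : ℂ × ℂ) :
    hermForm a d u v - μ * (‖v.1‖ ^ 2 + ‖v.2‖ ^ 2) = hermForm (a - μ) (d - μ) u v := by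
  unfold hermForm
  ring

lemma hermMinEigenvalue_le_left : hermMinEigenvalue a d u ≤ a := by
  have := Real.le_sqrt_of_sq_le (le_add_of_nonneg_right (by positivity) :
    (d - a) ^ 2 ≤ (d - a) ^ 2 + 4 * ‖u‖ ^ 2)
  unfold hermMinEigenvalue
  rw [← neg_sub d a, neg_sq]
  linarith

lemma hermMinEigenvalue_le_right : hermMinEigenvalue a d u ≤ d := by
  have := Real.le_sqrt_of_sq_le (le_add_of_nonneg_right (by positivity) :
    (a - d) ^ 2 ≤ (a - d) ^ 2 + 4 * ‖u‖ ^ 2)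
  unfold hermMinEigenvalue
  linarith

lemma sub_hermMinEigenvalue_mul_sub :
    (a - hermMinEigenvalue a d u) * (d - hermMinEigenvalue a d u) = ‖u‖ ^ 2 := by
  have := Real.sq_sqrt (by positivity : 0 ≤ (a - d) ^ 2 + 4 * ‖u‖ ^ 2)
  unfold hermMinEigenvalue
  linear_combination this / 4

/-- Shifting by `μ` leaves the form of `[[a - μ, u], [ū, d - μ]]`, which has zero determinant:
it is nonnegative and vanishes at some `v ≠ 0`. -/
lemma isLeast_hermMinEigenvalue :
    IsLeast {r : ℝ | ∃ v : ℂ × ℂ, v ≠ 0 ∧ r = hermForm a d u v / (‖v.1‖ ^ 2 + ‖v.2‖ ^ 2)}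
      (hermMinEigenvalue a d u) := by
  set μ := hermMinEigenvalue a d u
  have hshift := (sub_hermMinEigenvalue_mul_sub (a := a) (d := d) (u := u)).symm
  have hpos : ∀ v : ℂ × ℂ, v ≠ 0 → 0 < ‖v.1‖ ^ 2 + ‖v.2‖ ^ 2 := by
    rintro ⟨v₁, v₂⟩ hv
    rcases eq_or_ne v₁ 0 with rfl | h₁
    · have := norm_pos_iff.2 (by simpa using hv : v₂ ≠ 0)
      simp only [norm_zero]
      positivity
    · have := norm_pos_iff.2 h₁
      positivity
  constructor
  · obtain ⟨v, hv, h0⟩ := exists_hermForm_eq_zero hshift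
    refine ⟨v, hv, ?_⟩
    rw [eq_div_iff (hpos v hv).ne']
    linarith [hermForm_sub_mul (a := a) (d := d) (u := u) μ v]
  · rintro r ⟨v, hv, rfl⟩
    rw [le_div_iff₀ (hpos v hv)]
    have := hermForm_nonneg (sub_nonneg.2 hermMinEigenvalue_le_left)
      (sub_nonneg.2 hermMinEigenvalue_le_right) hshift.le v
    linarith [hermForm_sub_mul (a := a) (d := d) (u := u) μ v]

lemma hermMinEigenvalue_mul_add :
    hermMinEigenvalue a d u * (a + d) = a * d - ‖u‖ ^ 2 + hermMinEigenvalue a d u ^ 2 := by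
  linear_combination -(sub_hermMinEigenvalue_mul_sub (a := a) (d := d) (u := u))

lemma le_hermMinEigenvalue_mul_add : a * d - ‖u‖ ^ 2 ≤ hermMinEigenvalue a d u * (a + d) := by
  nlinarith [hermMinEigenvalue_mul_add (a := a) (d := d) (u := u)]

lemma hermMinEigenvalue_nonneg (ha : 0 ≤ a) (hd : 0 ≤ d) (hu : ‖u‖ ^ 2 ≤ a * d) :
    0 ≤ hermMinEigenvalue a d u := by
  have : √((a - d) ^ 2 + 4 * ‖u‖ ^ 2) ≤ a + d :=
    Real.sqrt_le_iff.2 ⟨by linarith, by nlinarith⟩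
  unfold hermMinEigenvalue
  linarith

/-- From `μ (a + d) = (a d - |u|²) + μ²` and `0 ≤ μ ≤ (a + d) / 2`. -/
lemma hermMinEigenvalue_mul_add_le (ha : 0 ≤ a) (hd : 0 ≤ d) (hu : ‖u‖ ^ 2 ≤ a * d) :
    hermMinEigenvalue a d u * (a + d) ≤ 2 * (a * d - ‖u‖ ^ 2) := by
  have h0 := hermMinEigenvalue_nonneg ha hd hu
  have h1 := hermMinEigenvalue_le_left (a := a) (d := d) (u := u)
  have h2 := hermMinEigenvalue_le_right (a := a) (d := d) (u := u)
  nlinarith [hermMinEigenvalue_mul_add (a := a) (d := d) (u := u)]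

end Hermitian

noncomputable def wirtingerCLM (c₁ c₂ c₃ c₄ : ℂ) : ℂ × ℂ →L[ℝ] ℂ :=
  c₁ • ContinuousLinearMap.fst ℝ ℂ ℂ
    + c₂ • conjCLE.toContinuousLinearMap.comp (ContinuousLinearMap.fst ℝ ℂ ℂ)
    + c₃ • ContinuousLinearMap.snd ℝ ℂ ℂ
    + c₄ • conjCLE.toContinuousLinearMap.comp (ContinuousLinearMap.snd ℝ ℂ ℂ)

@[simp]
lemma wirtingerCLM_apply (c₁ c₂ c₃ c₄ : ℂ) (v : ℂ × ℂ) :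
    wirtingerCLM c₁ c₂ c₃ c₄ v = c₁ * v.1 + c₂ * conj v.1 + c₃ * v.2 + c₄ * conj v.2 := by
  simp [wirtingerCLM]

section Wirtinger

variable {f : ℂ × ℂ → ℂ} {p : ℂ × ℂ} {c₁ c₂ c₃ c₄ : ℂ}

lemma dz_eq_of_hasFDerivAt (h : HasFDerivAt f (wirtingerCLM c₁ c₂ c₃ c₄) p) :
    dz f p = c₁ := by
  simp only [dz, h.fderiv, wirtingerCLM_apply, map_one, map_zero, conj_I]
  linear_combination (c₂ - c₁) / 2 * I_mul_I

lemma dzbar_eq_of_hasFDerivAt (h : HasFDerivAt f (wirtingerCLM c₁ c₂ c₃ c₄) p) :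
    dzbar f p = c₂ := by
  simp only [dzbar, h.fderiv, wirtingerCLM_apply, map_one, map_zero, conj_I]
  linear_combination (c₁ - c₂) / 2 * I_mul_I

lemma dw_eq_of_hasFDerivAt (h : HasFDerivAt f (wirtingerCLM c₁ c₂ c₃ c₄) p) :
    dw f p = c₃ := by
  simp only [dw, h.fderiv, wirtingerCLM_apply, map_one, map_zero, conj_I]
  linear_combination (c₄ - c₃) / 2 * I_mul_I

lemma dwbar_eq_of_hasFDerivAt (h : HasFDerivAt f (wirtingerCLM c₁ c₂ c₃ c₄) p) :
    dwbar f p = c₄ := by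
  simp only [dwbar, h.fderiv, wirtingerCLM_apply, map_one, map_zero, conj_I]
  linear_combination (c₃ - c₄) / 2 * I_mul_I

end Wirtinger

noncomputable def mono (a b c d : ℕ) (p : ℂ × ℂ) : ℂ :=
  p.1 ^ a * conj p.1 ^ b * p.2 ^ c * conj p.2 ^ d

lemma hasFDerivAt_mono (a b c d : ℕ) (p : ℂ × ℂ) :
    HasFDerivAt (mono a b c d)
      (wirtingerCLM (a * mono (a - 1) b c d p) (b * mono a (b - 1) c d p)
        (c * mono a b (c - 1) d p) (d * mono a b c (d - 1) p)) p := by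
  have hz := (hasDerivAt_pow a p.1).comp_hasFDerivAt p (hasFDerivAt_fst (𝕜 := ℝ))
  have hz' := (hasDerivAt_pow b (conj p.1)).comp_hasFDerivAt p
    (conjCLE.toContinuousLinearMap.comp (ContinuousLinearMap.fst ℝ ℂ ℂ)).hasFDerivAt
  have hw := (hasDerivAt_pow c p.2).comp_hasFDerivAt p (hasFDerivAt_snd (𝕜 := ℝ))
  have hw' := (hasDerivAt_pow d (conj p.2)).comp_hasFDerivAt p
    (conjCLE.toContinuousLinearMap.comp (ContinuousLinearMap.snd ℝ ℂ ℂ)).hasFDerivAt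
  refine (((hz.mul hz').mul hw).mul hw').congr_fderiv (ContinuousLinearMap.ext fun v => ?_)
  simp [mono]
  ring

lemma hasFDerivAt_sum_mono {ι : Type*} (s : Finset ι) (g : ι → ℂ) (a b c d : ι → ℕ)
    (p : ℂ × ℂ) :
    HasFDerivAt (fun p => ∑ i ∈ s, g i * mono (a i) (b i) (c i) (d i) p)
      (wirtingerCLM (∑ i ∈ s, g i * (a i * mono (a i - 1) (b i) (c i) (d i) p))
        (∑ i ∈ s, g i * (b i * mono (a i) (b i - 1) (c i) (d i) p))
        (∑ i ∈ s, g i * (c i * mono (a i) (b i) (c i - 1) (d i) p))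
        (∑ i ∈ s, g i * (d i * mono (a i) (b i) (c i) (d i - 1) p))) p := by
  refine (HasFDerivAt.fun_sum fun i _ =>
    (hasFDerivAt_mono (a i) (b i) (c i) (d i) p).const_mul (g i)).congr_fderiv
    (ContinuousLinearMap.ext fun v => ?_)
  simp only [FunLike.coe_sum, Finset.sum_apply, FunLike.coe_smul, Pi.smul_apply, wirtingerCLM_apply,
    smul_eq_mul, Finset.sum_mul, ← Finset.sum_add_distrib]
  exact Finset.sum_congr rfl fun i _ => by ring

lemma mono_self (a c : ℕ) (p : ℂ × ℂ) :
    mono a a c c p = ((‖p.1‖ ^ 2) ^ a * (‖p.2‖ ^ 2) ^ c : ℝ) := by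
  calc mono a a c c p = (p.1 * conj p.1) ^ a * (p.2 * conj p.2) ^ c := by
        simp only [mono, mul_pow]; ring
    _ = _ := by simp only [mul_conj']; push_cast; rfl

lemma mono_conj_mul (a c : ℕ) (p : ℂ × ℂ) :
    mono a (a + 1) (c + 1) c p = conj p.1 * p.2 * mono a a c c p := by
  simp only [mono]; ring

lemma mono_mul_conj (a c : ℕ) (p : ℂ × ℂ) :
    mono (a + 1) a c (c + 1) p = p.1 * conj p.2 * mono a a c c p := by
  simp only [mono]; ring

noncomputable def hessZZ (Γ : Finset (ℕ × ℕ)) (x y : ℝ) : ℝ :=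
  ∑ q ∈ Γ, (q.1 : ℝ) ^ 2 * x ^ (q.1 - 1) * y ^ q.2

noncomputable def hessWW (Γ : Finset (ℕ × ℕ)) (x y : ℝ) : ℝ :=
  ∑ q ∈ Γ, (q.2 : ℝ) ^ 2 * x ^ q.1 * y ^ (q.2 - 1)

noncomputable def hessZW (Γ : Finset (ℕ × ℕ)) (x y : ℝ) : ℝ :=
  ∑ q ∈ Γ, (q.1 : ℝ) * q.2 * x ^ (q.1 - 1) * y ^ (q.2 - 1)

noncomputable def hessDet (Γ : Finset (ℕ × ℕ)) (x y : ℝ) : ℝ :=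
  hessZZ Γ x y * hessWW Γ x y - x * y * hessZW Γ x y ^ 2

section Hessian

variable (Γ : Finset (ℕ × ℕ)) (p : ℂ × ℂ)

lemma phiGamma_eq_sum_mono :
    (fun p => (phiGamma Γ p : ℂ)) = fun p => ∑ q ∈ Γ, (1 : ℂ) * mono q.1 q.1 q.2 q.2 p := by
  ext p
  simp only [phiGamma, one_mul, mono_self, pow_mul]
  push_cast
  rfl

lemma dzbar_phiGamma :
    dzbar (fun p => (phiGamma Γ p : ℂ)) =
      fun p => ∑ q ∈ Γ, (q.1 : ℂ) * mono q.1 (q.1 - 1) q.2 q.2 p := by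
  ext p
  rw [phiGamma_eq_sum_mono, dzbar_eq_of_hasFDerivAt (hasFDerivAt_sum_mono ..)]
  simp only [one_mul]

lemma dwbar_phiGamma :
    dwbar (fun p => (phiGamma Γ p : ℂ)) =
      fun p => ∑ q ∈ Γ, (q.2 : ℂ) * mono q.1 q.1 q.2 (q.2 - 1) p := by
  ext p
  rw [phiGamma_eq_sum_mono, dwbar_eq_of_hasFDerivAt (hasFDerivAt_sum_mono ..)]
  simp only [one_mul]

lemma dz_dzbar_phiGamma :
    dz (dzbar fun p => (phiGamma Γ p : ℂ)) p = hessZZ Γ (‖p.1‖ ^ 2) (‖p.2‖ ^ 2) := by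
  rw [dzbar_phiGamma, dz_eq_of_hasFDerivAt (hasFDerivAt_sum_mono ..), hessZZ]
  push_cast
  refine Finset.sum_congr rfl fun q _ => ?_
  rw [mono_self]
  push_cast
  ring

lemma dw_dwbar_phiGamma :
    dw (dwbar fun p => (phiGamma Γ p : ℂ)) p = hessWW Γ (‖p.1‖ ^ 2) (‖p.2‖ ^ 2) := by
  rw [dwbar_phiGamma, dw_eq_of_hasFDerivAt (hasFDerivAt_sum_mono ..), hessWW]
  push_cast
  refine Finset.sum_congr rfl fun q _ => ?_
  rw [mono_self]
  push_cast
  ring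

lemma dz_dwbar_phiGamma :
    dz (dwbar fun p => (phiGamma Γ p : ℂ)) p =
      conj p.1 * p.2 * hessZW Γ (‖p.1‖ ^ 2) (‖p.2‖ ^ 2) := by
  rw [dwbar_phiGamma, dz_eq_of_hasFDerivAt (hasFDerivAt_sum_mono ..), hessZW]
  push_cast
  rw [Finset.mul_sum]
  refine Finset.sum_congr rfl fun q _ => ?_
  obtain ⟨_ | α, _ | β⟩ := q
  · simp
  · simp
  · simp
  · simp only [Nat.add_sub_cancel, mono_conj_mul, mono_self]
    push_cast
    ring

lemma dw_dzbar_phiGamma :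
    dw (dzbar fun p => (phiGamma Γ p : ℂ)) p =
      p.1 * conj p.2 * hessZW Γ (‖p.1‖ ^ 2) (‖p.2‖ ^ 2) := by
  rw [dzbar_phiGamma, dw_eq_of_hasFDerivAt (hasFDerivAt_sum_mono ..), hessZW]
  push_cast
  rw [Finset.mul_sum]
  refine Finset.sum_congr rfl fun q _ => ?_
  obtain ⟨_ | α, _ | β⟩ := q
  · simp
  · simp
  · simp
  · simp only [Nat.add_sub_cancel, mono_mul_conj, mono_self]
    push_cast
    ring

lemma hessForm_eq_hermForm (v : ℂ × ℂ) :
    hessForm Γ p v = hermForm (hessZZ Γ (‖p.1‖ ^ 2) (‖p.2‖ ^ 2))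
      (hessWW Γ (‖p.1‖ ^ 2) (‖p.2‖ ^ 2)) (conj p.1 * p.2 * hessZW Γ (‖p.1‖ ^ 2) (‖p.2‖ ^ 2)) v := by
  rw [hessForm, dz_dzbar_phiGamma, dz_dwbar_phiGamma, dw_dzbar_phiGamma, dw_dwbar_phiGamma]
  set E := hessZW Γ (‖p.1‖ ^ 2) (‖p.2‖ ^ 2)
  have hconj : p.1 * conj p.2 * (E : ℂ) * v.2 * conj v.1 =
      conj (conj p.1 * p.2 * (E : ℂ) * v.1 * conj v.2) := by
    simp only [map_mul, conj_conj, conj_ofReal]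
    ring
  simp only [hermForm, hconj, mul_assoc _ v.1 (conj v.1), mul_assoc _ v.2 (conj v.2), mul_conj',
    add_re, conj_re, re_ofReal_mul, ← ofReal_pow, ofReal_re]
  ring

lemma lamGamma_eq_hermMinEigenvalue :
    lamGamma Γ p = hermMinEigenvalue (hessZZ Γ (‖p.1‖ ^ 2) (‖p.2‖ ^ 2))
      (hessWW Γ (‖p.1‖ ^ 2) (‖p.2‖ ^ 2)) (conj p.1 * p.2 * hessZW Γ (‖p.1‖ ^ 2) (‖p.2‖ ^ 2)) := by
  simp only [lamGamma, hessForm_eq_hermForm]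
  exact isLeast_hermMinEigenvalue.csInf_eq

end Hessian

noncomputable def monomialSum (S : Finset (ℕ × ℕ)) (x y : ℝ) : ℝ :=
  ∑ m ∈ S, x ^ m.1 * y ^ m.2

lemma phiGamma_eq_monomialSum (S : Finset (ℕ × ℕ)) (p : ℂ × ℂ) :
    phiGamma S p = monomialSum S (‖p.1‖ ^ 2) (‖p.2‖ ^ 2) := by
  simp only [phiGamma, monomialSum, pow_mul]

section MonomialSum

variable {x y : ℝ}

lemma monomialSum_nonneg (hx : 0 ≤ x) (hy : 0 ≤ y) (S : Finset (ℕ × ℕ)) :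
    0 ≤ monomialSum S x y :=
  Finset.sum_nonneg fun _ _ => by positivity

lemma monomial_le_monomialSum (hx : 0 ≤ x) (hy : 0 ≤ y) {S : Finset (ℕ × ℕ)} {m : ℕ × ℕ}
    (hm : m ∈ S) : x ^ m.1 * y ^ m.2 ≤ monomialSum S x y :=
  Finset.single_le_sum (f := fun m : ℕ × ℕ => x ^ m.1 * y ^ m.2) (fun _ _ => by positivity) hm

lemma monomialSum_image_le (hx : 0 ≤ x) (hy : 0 ≤ y) {ι : Type*} (s : Finset ι) (f : ι → ℕ × ℕ) :
    monomialSum (s.image f) x y ≤ ∑ i ∈ s, x ^ (f i).1 * y ^ (f i).2 :=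
  Finset.sum_image_le_of_nonneg fun _ _ => by positivity

lemma monomialSum_union_le (hx : 0 ≤ x) (hy : 0 ≤ y) (S T : Finset (ℕ × ℕ)) :
    monomialSum (S ∪ T) x y ≤ monomialSum S x y + monomialSum T x y := by
  have := Finset.sum_union_inter (s₁ := S) (s₂ := T) (f := fun m : ℕ × ℕ => x ^ m.1 * y ^ m.2)
  have := monomialSum_nonneg hx hy (S ∩ T)
  unfold monomialSum at *
  linarith

end MonomialSum

section PowPred

variable {R : Type*} [CommSemiring R] (x : R) (n m : ℕ)

/-- At `n = 0` the truncated exponent `n - 1` is harmless because of the factor `n`. -/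
lemma natCast_mul_pow_sub_one_mul_pow : n * x ^ (n - 1) * x ^ m = n * x ^ (n + m - 1) := by
  cases n with
  | zero => simp
  | succ n => rw [Nat.add_sub_cancel, Nat.add_right_comm, Nat.add_sub_cancel, mul_assoc, pow_add]

lemma mul_natCast_mul_pow_sub_one_mul_natCast_mul_pow_sub_one :
    x * (n * x ^ (n - 1)) * (m * x ^ (m - 1)) = n * m * x ^ (n + m - 1) := by
  rcases n with _ | n
  · simp
  rcases m with _ | m
  · simp
  rw [Nat.add_sub_cancel, Nat.add_sub_cancel, show n + 1 + (m + 1) - 1 = n + m + 1 by omega]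
  ring

end PowPred

lemma two_mul_hessDet_eq (Γ : Finset (ℕ × ℕ)) (x y : ℝ) :
    2 * hessDet Γ x y =
      ∑ q ∈ Γ, ∑ r ∈ Γ, ((q.1 * r.2 : ℝ) - q.2 * r.1) ^ 2 *
        (x ^ (q.1 + r.1 - 1) * y ^ (q.2 + r.2 - 1)) := by
  have hdet : hessDet Γ x y =
      ∑ q ∈ Γ, ∑ r ∈ Γ, (q.1 * r.2 : ℝ) * (q.1 * r.2 - q.2 * r.1) *
        (x ^ (q.1 + r.1 - 1) * y ^ (q.2 + r.2 - 1)) := by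
    rw [hessDet, hessZZ, hessWW, hessZW, sq, Finset.sum_mul_sum, Finset.sum_mul_sum, Finset.mul_sum,
      ← Finset.sum_sub_distrib]
    refine Finset.sum_congr rfl fun q _ => ?_
    rw [Finset.mul_sum, ← Finset.sum_sub_distrib]
    refine Finset.sum_congr rfl fun r _ => ?_
    calc _ = q.1 * r.2 * ((q.1 * x ^ (q.1 - 1) * x ^ r.1) * (r.2 * y ^ (r.2 - 1) * y ^ q.2))
          - (x * (q.1 * x ^ (q.1 - 1)) * (r.1 * x ^ (r.1 - 1)))
            * (y * (q.2 * y ^ (q.2 - 1)) * (r.2 * y ^ (r.2 - 1))) := by ring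
      _ = _ := by
        rw [natCast_mul_pow_sub_one_mul_pow, natCast_mul_pow_sub_one_mul_pow,
          mul_natCast_mul_pow_sub_one_mul_natCast_mul_pow_sub_one,
          mul_natCast_mul_pow_sub_one_mul_natCast_mul_pow_sub_one, add_comm r.2]
        ring
  rw [two_mul, hdet]
  nth_rewrite 2 [Finset.sum_comm]
  rw [← Finset.sum_add_distrib]
  refine Finset.sum_congr rfl fun q _ => ?_
  rw [← Finset.sum_add_distrib]
  refine Finset.sum_congr rfl fun r _ => ?_
  rw [add_comm r.1, add_comm r.2]
  ring

lemma one_le_sq_natCast_sub_natCast {m n : ℕ} (h : m ≠ n) : (1 : ℝ) ≤ ((m : ℝ) - n) ^ 2 := by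
  have : (1 : ℝ) ≤ |(m : ℝ) - n| := by
    exact_mod_cast Int.one_le_abs (sub_ne_zero.2 (Nat.cast_injective.ne h) : (m : ℤ) - n ≠ 0)
  exact (one_le_sq_iff_one_le_abs _).2 this

section Comparison

variable (Γ : Finset (ℕ × ℕ)) {x y : ℝ}

lemma hessZZ_nonneg (hx : 0 ≤ x) (hy : 0 ≤ y) : 0 ≤ hessZZ Γ x y :=
  Finset.sum_nonneg fun _ _ => by positivity

lemma hessWW_nonneg (hx : 0 ≤ x) (hy : 0 ≤ y) : 0 ≤ hessWW Γ x y :=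
  Finset.sum_nonneg fun _ _ => by positivity

lemma monomialSum_gammaOne_le (hx : 0 ≤ x) (hy : 0 ≤ y) :
    monomialSum (GammaOne Γ) x y ≤ 2 * hessDet Γ x y := by
  rw [two_mul_hessDet_eq, ← Finset.sum_product']
  refine (monomialSum_image_le hx hy _ _).trans <|
    (Finset.sum_le_sum fun q hq => ?_).trans <|
      Finset.sum_le_sum_of_subset_of_nonneg (Finset.filter_subset _ _) fun _ _ _ => by positivity
  have hminor := one_le_sq_natCast_sub_natCast (Finset.mem_filter.1 hq).2
  push_cast at hminor
  exact le_mul_of_one_le_left (by positivity) hminor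

lemma hessDet_nonneg (hx : 0 ≤ x) (hy : 0 ≤ y) : 0 ≤ hessDet Γ x y := by
  linarith [monomialSum_gammaOne_le Γ hx hy, monomialSum_nonneg hx hy (GammaOne Γ)]

lemma two_mul_hessDet_le (hx : 0 ≤ x) (hy : 0 ≤ y) :
    2 * hessDet Γ x y ≤
      (∑ q ∈ Γ, ∑ r ∈ Γ, ((q.1 * r.2 : ℝ) - q.2 * r.1) ^ 2) * monomialSum (GammaOne Γ) x y := by
  rw [two_mul_hessDet_eq, Finset.sum_mul]
  refine Finset.sum_le_sum fun q hq => ?_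
  rw [Finset.sum_mul]
  refine Finset.sum_le_sum fun r hr => ?_
  by_cases hdep : q.1 * r.2 = q.2 * r.1
  · have : (q.1 * r.2 : ℝ) - q.2 * r.1 = 0 := sub_eq_zero.2 (by exact_mod_cast hdep)
    simp [this]
  · refine mul_le_mul_of_nonneg_left
      (monomial_le_monomialSum hx hy (m := (q.1 + r.1 - 1, q.2 + r.2 - 1)) ?_) (sq_nonneg _)
    exact Finset.mem_image_of_mem _ (Finset.mem_filter.2 ⟨Finset.mem_product.2 ⟨hq, hr⟩, hdep⟩ :
      (q, r) ∈ (Γ ×ˢ Γ).filter fun q => q.1.1 * q.2.2 ≠ q.1.2 * q.2.1)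

lemma monomialSum_gammaTwo_le (hx : 0 ≤ x) (hy : 0 ≤ y) :
    monomialSum (GammaTwo Γ) x y ≤ hessZZ Γ x y + hessWW Γ x y := by
  have one_le_sq {n : ℕ} (hn : n ≠ 0) : (1 : ℝ) ≤ (n : ℝ) ^ 2 :=
    one_le_pow₀ (by exact_mod_cast Nat.one_le_iff_ne_zero.2 hn)
  refine (monomialSum_union_le hx hy _ _).trans (add_le_add ?_ ?_) <;>
  · refine (monomialSum_image_le hx hy _ _).trans <|
      (Finset.sum_le_sum fun q hq => ?_).trans <|
        Finset.sum_le_sum_of_subset_of_nonneg (Finset.filter_subset _ _) fun _ _ _ => by positivity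
    rw [mul_assoc]
    exact le_mul_of_one_le_left (by positivity) (one_le_sq (Finset.mem_filter.1 hq).2)

lemma hessZZ_add_hessWW_le (hx : 0 ≤ x) (hy : 0 ≤ y) :
    hessZZ Γ x y + hessWW Γ x y ≤
      (∑ q ∈ Γ, ((q.1 : ℝ) ^ 2 + q.2 ^ 2)) * monomialSum (GammaTwo Γ) x y := by
  rw [hessZZ, hessWW, ← Finset.sum_add_distrib, Finset.sum_mul]
  refine Finset.sum_le_sum fun q hq => ?_
  rw [add_mul, mul_assoc, mul_assoc]
  refine add_le_add ?_ ?_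
  · rcases eq_or_ne q.1 0 with h | h
    · simp [h]
    · refine mul_le_mul_of_nonneg_left
        (monomial_le_monomialSum hx hy (m := (q.1 - 1, q.2)) ?_) (sq_nonneg _)
      exact Finset.mem_union_left _ (Finset.mem_image_of_mem _ (Finset.mem_filter.2 ⟨hq, h⟩))
  · rcases eq_or_ne q.2 0 with h | h
    · simp [h]
    · refine mul_le_mul_of_nonneg_left
        (monomial_le_monomialSum hx hy (m := (q.1, q.2 - 1)) ?_) (sq_nonneg _)
      exact Finset.mem_union_right _ (Finset.mem_image_of_mem _ (Finset.mem_filter.2 ⟨hq, h⟩))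

end Comparison

section Eigenvalue

variable (Γ : Finset (ℕ × ℕ)) (p : ℂ × ℂ)

lemma hessDet_eq_sub_norm_sq :
    hessDet Γ (‖p.1‖ ^ 2) (‖p.2‖ ^ 2) =
      hessZZ Γ (‖p.1‖ ^ 2) (‖p.2‖ ^ 2) * hessWW Γ (‖p.1‖ ^ 2) (‖p.2‖ ^ 2) -
        ‖conj p.1 * p.2 * (hessZW Γ (‖p.1‖ ^ 2) (‖p.2‖ ^ 2) : ℂ)‖ ^ 2 := by
  rw [hessDet, norm_mul, norm_mul, RCLike.norm_conj, norm_real, Real.norm_eq_abs, mul_pow, mul_pow,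
    sq_abs]

lemma lamGamma_nonneg : 0 ≤ lamGamma Γ p := by
  rw [lamGamma_eq_hermMinEigenvalue]
  have := hessDet_nonneg Γ (sq_nonneg ‖p.1‖) (sq_nonneg ‖p.2‖)
  rw [hessDet_eq_sub_norm_sq] at this
  exact hermMinEigenvalue_nonneg (hessZZ_nonneg Γ (by positivity) (by positivity))
    (hessWW_nonneg Γ (by positivity) (by positivity)) (sub_nonneg.1 this)

lemma hessDet_le_lamGamma_mul :
    hessDet Γ (‖p.1‖ ^ 2) (‖p.2‖ ^ 2) ≤
      lamGamma Γ p * (hessZZ Γ (‖p.1‖ ^ 2) (‖p.2‖ ^ 2) + hessWW Γ (‖p.1‖ ^ 2) (‖p.2‖ ^ 2)) := by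
  rw [lamGamma_eq_hermMinEigenvalue, hessDet_eq_sub_norm_sq]
  exact le_hermMinEigenvalue_mul_add

lemma lamGamma_mul_le_two_mul_hessDet :
    lamGamma Γ p * (hessZZ Γ (‖p.1‖ ^ 2) (‖p.2‖ ^ 2) + hessWW Γ (‖p.1‖ ^ 2) (‖p.2‖ ^ 2)) ≤
      2 * hessDet Γ (‖p.1‖ ^ 2) (‖p.2‖ ^ 2) := by
  have := hessDet_nonneg Γ (sq_nonneg ‖p.1‖) (sq_nonneg ‖p.2‖)
  rw [lamGamma_eq_hermMinEigenvalue, hessDet_eq_sub_norm_sq] at *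
  exact hermMinEigenvalue_mul_add_le (hessZZ_nonneg Γ (by positivity) (by positivity))
    (hessWW_nonneg Γ (by positivity) (by positivity)) (sub_nonneg.1 this)

end Eigenvalue

/-- `φ_{Γ⁽¹⁾} ≈ λ_Γ ⬝ φ_{Γ⁽²⁾}` with constants depending only on `Γ`, where `λ_Γ` is the
least eigenvalue of the complex Hessian of `φ_Γ`. -/
theorem min_eigenvalue_comparable (Γ : Finset (ℕ × ℕ)) :
    ∃ c C : ℝ, 0 < c ∧ c ≤ C ∧ ∀ p : ℂ × ℂ,
      c * phiGamma (GammaOne Γ) p ≤ lamGamma Γ p * phiGamma (GammaTwo Γ) p ∧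
      lamGamma Γ p * phiGamma (GammaTwo Γ) p ≤ C * phiGamma (GammaOne Γ) p := by
  set K₁ := ∑ q ∈ Γ, ∑ r ∈ Γ, ((q.1 * r.2 : ℝ) - q.2 * r.1) ^ 2
  set K₂ := ∑ q ∈ Γ, ((q.1 : ℝ) ^ 2 + q.2 ^ 2)
  have hc : 1 / (2 * (K₂ + 1)) ≤ 1 := by
    rw [div_le_one (by positivity)]; linarith [show 0 ≤ K₂ by positivity]
  refine ⟨1 / (2 * (K₂ + 1)), K₁ + 1, by positivity, hc.trans (by simp [K₁]; positivity),
    fun p => ?_⟩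
  have hx : 0 ≤ ‖p.1‖ ^ 2 := by positivity
  have hy : 0 ≤ ‖p.2‖ ^ 2 := by positivity
  have hΦ₁ := monomialSum_nonneg hx hy (GammaOne Γ)
  have hΦ₂ := monomialSum_nonneg hx hy (GammaTwo Γ)
  have hlam := lamGamma_nonneg Γ p
  rw [phiGamma_eq_monomialSum, phiGamma_eq_monomialSum]
  constructor
  · rw [one_div, inv_mul_le_iff₀ (by positivity)]
    calc monomialSum (GammaOne Γ) _ _ ≤ 2 * hessDet Γ _ _ := monomialSum_gammaOne_le Γ hx hy
      _ ≤ 2 * (lamGamma Γ p * (hessZZ Γ _ _ + hessWW Γ _ _)) := by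
        gcongr; exact hessDet_le_lamGamma_mul Γ p
      _ ≤ 2 * (lamGamma Γ p * ((K₂ + 1) * monomialSum (GammaTwo Γ) _ _)) := by
        gcongr; linarith [hessZZ_add_hessWW_le Γ hx hy]
      _ = 2 * (K₂ + 1) * (lamGamma Γ p * monomialSum (GammaTwo Γ) _ _) := by ring
  · calc lamGamma Γ p * monomialSum (GammaTwo Γ) _ _
        ≤ lamGamma Γ p * (hessZZ Γ _ _ + hessWW Γ _ _) := by
          gcongr; exact monomialSum_gammaTwo_le Γ hx hy
      _ ≤ 2 * hessDet Γ _ _ := lamGamma_mul_le_two_mul_hessDet Γ p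
      _ ≤ K₁ * monomialSum (GammaOne Γ) _ _ := two_mul_hessDet_le Γ hx hy
      _ ≤ (K₁ + 1) * monomialSum (GammaOne Γ) _ _ := by linarith
end

section
/- Let Gamma be a homogeneous model monomial weight in C^2 ((m,0),(0,n) in Gamma, all points on the segment n*alpha + m*beta = nm, m,n >= 1, non-decoupled), and let sigma, tau be the extremal ratios: sigma = max alpha/beta and tau = max beta/alpha over (alpha,beta) in Gamma with alpha,beta != 0. Let lambda_Gamma(z,w) denote the minimal eigenvalue of the complex Hessian of phi_Gamma. Then there is a constant c > 0 such that lambda_Gamma(z,w) >= c*(|z|^{2 sigma} + |w|^{2 tau}) for all (z,w) in the region E := {|z| >= 1 and |w| >= |z|^{-sigma}} union {|w| >= 1 and |z| >= |w|^{-tau}}. -/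
/-!
`φ_Γ = ∑ |z^α w^β|²` is a sum of squared moduli of holomorphic monomials, so its complex Hessian
is the form `v ↦ ∑_{(α,β) ∈ Γ} |d(z^α w^β)(v)|²`. Keeping only two terms `P, Q` leaves a
positive semidefinite `2 × 2` form whose least eigenvalue is at least `det / tr` (Lagrange's
identity).

Take `(A, B) ∈ Γ` with `A = σ B` and put `u = |z|^σ`, so that `u^B = |z|^A`. Where
`|z|^σ ≥ |w|^τ`, the region `E` forces `|z| ≥ 1` and `u |w| ≥ 1`, and weighted AM–GM along the
segment `nα + mβ = nm` gives `u |w| ≤ max (|z|^m, |w|^n)`. Accordingly the pair `(m,0), (A,B)`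
or the pair `(m,0), (0,n)` has `det / tr ≥ u² / 3`. Where `|w|^τ ≥ |z|^σ` the same argument
applies with `z` and `w` exchanged.
-/

open ComplexConjugate

noncomputable def wirtingerLinear (A B C D : ℂ) : ℂ × ℂ →L[ℝ] ℂ :=
  A • ContinuousLinearMap.fst ℝ ℂ ℂ
    + B • (Complex.conjCLE.toContinuousLinearMap ∘L ContinuousLinearMap.fst ℝ ℂ ℂ)
    + C • ContinuousLinearMap.snd ℝ ℂ ℂ
    + D • (Complex.conjCLE.toContinuousLinearMap ∘L ContinuousLinearMap.snd ℝ ℂ ℂ)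

@[simp] lemma wirtingerLinear_apply (A B C D : ℂ) (v : ℂ × ℂ) :
    wirtingerLinear A B C D v = A * v.1 + B * conj v.1 + C * v.2 + D * conj v.2 := by
  simp [wirtingerLinear]

lemma wirtinger_of_hasFDerivAt {f : ℂ × ℂ → ℂ} {A B C D : ℂ} {p : ℂ × ℂ}
    (h : HasFDerivAt f (wirtingerLinear A B C D) p) :
    dz f p = A ∧ dzbar f p = B ∧ dw f p = C ∧ dwbar f p = D := by
  simp only [dz, dzbar, dw, dwbar, h.fderiv, wirtingerLinear_apply, map_one, map_zero,
    Complex.conj_I]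
  refine ⟨?_, ?_, ?_, ?_⟩ <;> ring_nf <;> simp only [Complex.I_sq] <;> ring

def mixedMonomial (i j k l : ℕ) (p : ℂ × ℂ) : ℂ :=
  p.1 ^ i * conj p.1 ^ j * p.2 ^ k * conj p.2 ^ l

lemma hasFDerivAt_mixedMonomial (i j k l : ℕ) (p : ℂ × ℂ) :
    HasFDerivAt (mixedMonomial i j k l)
      (wirtingerLinear (i * mixedMonomial (i - 1) j k l p) (j * mixedMonomial i (j - 1) k l p)
        (k * mixedMonomial i j (k - 1) l p) (l * mixedMonomial i j k (l - 1) p)) p := by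
  have hpow (n : ℕ) (x : ℂ) := (hasDerivAt_pow n x).hasFDerivAt.restrictScalars ℝ
  have H := ((((hpow i p.1).comp p hasFDerivAt_fst).mul
    ((hpow j (conj p.1)).comp p ((Complex.conjCLE.toContinuousLinearMap.hasFDerivAt).comp p
      hasFDerivAt_fst))).mul ((hpow k p.2).comp p hasFDerivAt_snd)).mul
    ((hpow l (conj p.2)).comp p ((Complex.conjCLE.toContinuousLinearMap.hasFDerivAt).comp p
      hasFDerivAt_snd))
  refine H.congr_fderiv (ContinuousLinearMap.ext fun v => ?_)
  simp [mixedMonomial]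
  ring

noncomputable def mixedPolynomial {ι : Type*} (s : Finset ι) (c : ι → ℂ) (i j k l : ι → ℕ)
    (p : ℂ × ℂ) : ℂ :=
  ∑ q ∈ s, c q * mixedMonomial (i q) (j q) (k q) (l q) p

section mixedPolynomial

variable {ι : Type*} (s : Finset ι) (c : ι → ℂ) (i j k l : ι → ℕ)

lemma hasFDerivAt_mixedPolynomial (p : ℂ × ℂ) :
    HasFDerivAt (mixedPolynomial s c i j k l)
      (wirtingerLinear (mixedPolynomial s (fun q => c q * i q) (i · - 1) j k l p)
        (mixedPolynomial s (fun q => c q * j q) i (j · - 1) k l p)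
        (mixedPolynomial s (fun q => c q * k q) i j (k · - 1) l p)
        (mixedPolynomial s (fun q => c q * l q) i j k (l · - 1) p)) p := by
  have H := HasFDerivAt.fun_sum (u := s) fun q _ =>
    (hasFDerivAt_mixedMonomial (i q) (j q) (k q) (l q) p).const_mul (c q)
  refine H.congr_fderiv (ContinuousLinearMap.ext fun v => ?_)
  simp only [sum_apply, smul_apply, wirtingerLinear_apply, mixedPolynomial, Finset.sum_mul,
    ← Finset.sum_add_distrib, smul_eq_mul]
  exact Finset.sum_congr rfl fun q _ => by ring

lemma dz_mixedPolynomial :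
    dz (mixedPolynomial s c i j k l) = mixedPolynomial s (fun q => c q * i q) (i · - 1) j k l :=
  funext fun p => (wirtinger_of_hasFDerivAt (hasFDerivAt_mixedPolynomial s c i j k l p)).1

lemma dzbar_mixedPolynomial :
    dzbar (mixedPolynomial s c i j k l) = mixedPolynomial s (fun q => c q * j q) i (j · - 1) k l :=
  funext fun p => (wirtinger_of_hasFDerivAt (hasFDerivAt_mixedPolynomial s c i j k l p)).2.1

lemma dw_mixedPolynomial :
    dw (mixedPolynomial s c i j k l) = mixedPolynomial s (fun q => c q * k q) i j (k · - 1) l :=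
  funext fun p => (wirtinger_of_hasFDerivAt (hasFDerivAt_mixedPolynomial s c i j k l p)).2.2.1

lemma dwbar_mixedPolynomial :
    dwbar (mixedPolynomial s c i j k l) = mixedPolynomial s (fun q => c q * l q) i j k (l · - 1) :=
  funext fun p => (wirtinger_of_hasFDerivAt (hasFDerivAt_mixedPolynomial s c i j k l p)).2.2.2

end mixedPolynomial

lemma ofReal_phiGamma (Γ : Finset (ℕ × ℕ)) :
    (fun p => (phiGamma Γ p : ℂ)) = mixedPolynomial Γ 1 Prod.fst Prod.fst Prod.snd Prod.snd := by
  have hsq (a : ℕ) (x : ℂ) : ((‖x‖ ^ (2 * a) : ℝ) : ℂ) = x ^ a * conj x ^ a := by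
    rw [← mul_pow, Complex.mul_conj, Complex.normSq_eq_norm_sq, pow_mul]
    push_cast
    rfl
  funext p
  simp only [phiGamma, mixedPolynomial, mixedMonomial, Complex.ofReal_sum, Complex.ofReal_mul,
    hsq, Pi.one_apply, one_mul]
  exact Finset.sum_congr rfl fun q _ => by ring

def monomialDeriv (q : ℕ × ℕ) (p v : ℂ × ℂ) : ℂ :=
  q.1 * p.1 ^ (q.1 - 1) * p.2 ^ q.2 * v.1 + q.2 * p.1 ^ q.1 * p.2 ^ (q.2 - 1) * v.2

lemma hessForm_eq_sum (Γ : Finset (ℕ × ℕ)) (p v : ℂ × ℂ) :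
    hessForm Γ p v = ∑ q ∈ Γ, ‖monomialDeriv q p v‖ ^ 2 := by
  simp only [hessForm, ofReal_phiGamma, dz_mixedPolynomial, dzbar_mixedPolynomial,
    dw_mixedPolynomial, dwbar_mixedPolynomial, mixedPolynomial, Finset.sum_mul,
    ← Finset.sum_add_distrib, Complex.re_sum]
  refine Finset.sum_congr rfl fun q _ => ?_
  rw [← Complex.normSq_eq_norm_sq, ← Complex.ofReal_re (Complex.normSq _), ← Complex.mul_conj]
  simp only [monomialDeriv, mixedMonomial, Pi.one_apply, map_add, map_mul, map_pow,
    map_natCast]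
  congr 1
  ring

lemma hessForm_image_swap (Γ : Finset (ℕ × ℕ)) (z w : ℂ) (v : ℂ × ℂ) :
    hessForm (Γ.image Prod.swap) (w, z) v.swap = hessForm Γ (z, w) v := by
  simp only [hessForm_eq_sum, Finset.sum_image fun _ _ _ _ h => Prod.swap_injective h]
  refine Finset.sum_congr rfl fun q _ => ?_
  simp only [monomialDeriv, Prod.fst_swap, Prod.snd_swap]
  congr 2
  ring

lemma mul_monomialDeriv (q : ℕ × ℕ) (z w : ℂ) (v : ℂ × ℂ) :
    z * w * monomialDeriv q (z, w) v
      = z ^ q.1 * w ^ q.2 * (q.1 * w) * v.1 + z ^ q.1 * w ^ q.2 * (q.2 * z) * v.2 := by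
  have h (a : ℕ) (x : ℂ) : (a : ℂ) * x ^ (a - 1) * x = a * x ^ a := by
    cases a <;> simp [pow_succ, mul_assoc]
  calc z * w * monomialDeriv q (z, w) v
      = (q.1 * z ^ (q.1 - 1) * z) * w ^ q.2 * w * v.1
        + (q.2 * w ^ (q.2 - 1) * w) * z ^ q.1 * z * v.2 := by
        simp only [monomialDeriv]; ring
    _ = _ := by rw [h, h]; ring

lemma norm_mul_add_mul_sq_le {R : Type*} [SeminormedRing R] (a b x y : R) :
    ‖a * x + b * y‖ ^ 2 ≤ (‖a‖ ^ 2 + ‖b‖ ^ 2) * (‖x‖ ^ 2 + ‖y‖ ^ 2) := by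
  have h : ‖a * x + b * y‖ ≤ ‖a‖ * ‖x‖ + ‖b‖ * ‖y‖ :=
    (norm_add_le _ _).trans (add_le_add (norm_mul_le _ _) (norm_mul_le _ _))
  nlinarith [pow_le_pow_left₀ (norm_nonneg _) h 2, sq_nonneg (‖a‖ * ‖y‖ - ‖b‖ * ‖x‖)]

/-- For the Hermitian form `|a·v|² + |b·v|²` this is `det · |v|² ≤ tr · form(v)`, so its least
eigenvalue is at least `det / tr`. -/
lemma norm_det_sq_mul_le {𝕜 : Type*} [NormedField 𝕜] (a₁ a₂ b₁ b₂ v₁ v₂ : 𝕜) :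
    ‖a₁ * b₂ - a₂ * b₁‖ ^ 2 * (‖v₁‖ ^ 2 + ‖v₂‖ ^ 2)
      ≤ (‖a₁‖ ^ 2 + ‖a₂‖ ^ 2 + ‖b₁‖ ^ 2 + ‖b₂‖ ^ 2)
        * (‖a₁ * v₁ + a₂ * v₂‖ ^ 2 + ‖b₁ * v₁ + b₂ * v₂‖ ^ 2) := by
  set x := a₁ * v₁ + a₂ * v₂
  set y := b₁ * v₁ + b₂ * v₂
  have h₁ : (a₁ * b₂ - a₂ * b₁) * v₁ = b₂ * x + (-a₂) * y := by ring
  have h₂ : (a₁ * b₂ - a₂ * b₁) * v₂ = a₁ * y + (-b₁) * x := by ring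
  have c₁ := norm_mul_add_mul_sq_le b₂ (-a₂) x y
  have c₂ := norm_mul_add_mul_sq_le a₁ (-b₁) y x
  rw [← h₁, norm_mul, norm_neg] at c₁
  rw [← h₂, norm_mul, norm_neg] at c₂
  linarith

lemma le_lamGamma_of_forall {Γ : Finset (ℕ × ℕ)} {p : ℂ × ℂ} {c : ℝ}
    (h : ∀ v : ℂ × ℂ, c * (‖v.1‖ ^ 2 + ‖v.2‖ ^ 2) ≤ hessForm Γ p v) : c ≤ lamGamma Γ p := by
  refine le_csInf ⟨_, (1, 0), by simp, rfl⟩ ?_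
  rintro r ⟨v, hv, rfl⟩
  have hv : 0 < ‖v.1‖ ^ 2 + ‖v.2‖ ^ 2 := by
    rcases not_and_or.1 (mt Prod.ext_iff.2 hv) with h | h
    · have := norm_pos_iff.2 h; positivity
    · have := norm_pos_iff.2 h; positivity
  exact (le_div_iff₀ hv).2 (h v)

/-- `det / tr` of the Hermitian form `|df_P(v)|² + |df_Q(v)|²`, both rescaled by `|zw|²`, in terms
of `s = |z|` and `t = |w|`. -/
noncomputable def pairBound (P Q : ℕ × ℕ) (s t : ℝ) : ℝ :=
  ((P.1 : ℝ) * Q.2 - P.2 * Q.1) ^ 2 * (s ^ (2 * P.1) * t ^ (2 * P.2))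
      * (s ^ (2 * Q.1) * t ^ (2 * Q.2))
    / (s ^ (2 * P.1) * t ^ (2 * P.2) * (P.1 ^ 2 * t ^ 2 + P.2 ^ 2 * s ^ 2)
      + s ^ (2 * Q.1) * t ^ (2 * Q.2) * (Q.1 ^ 2 * t ^ 2 + Q.2 ^ 2 * s ^ 2))

lemma norm_monomialDeriv_sq_add_le_hessForm {Γ : Finset (ℕ × ℕ)} {P Q : ℕ × ℕ} (hP : P ∈ Γ)
    (hQ : Q ∈ Γ) (hPQ : P ≠ Q) (p v : ℂ × ℂ) :
    ‖monomialDeriv P p v‖ ^ 2 + ‖monomialDeriv Q p v‖ ^ 2 ≤ hessForm Γ p v := by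
  rw [hessForm_eq_sum, ← Finset.sum_pair (f := fun q => ‖monomialDeriv q p v‖ ^ 2) hPQ]
  exact Finset.sum_le_sum_of_subset_of_nonneg (Finset.insert_subset hP (by simpa using hQ))
    fun _ _ _ => by positivity

lemma pairBound_mul_le_hessForm {Γ : Finset (ℕ × ℕ)} {P Q : ℕ × ℕ} (hP : P ∈ Γ) (hQ : Q ∈ Γ)
    (hPQ : P ≠ Q) {z w : ℂ} (hz : z ≠ 0) (hw : w ≠ 0) (v : ℂ × ℂ) :
    pairBound P Q ‖z‖ ‖w‖ * (‖v.1‖ ^ 2 + ‖v.2‖ ^ 2) ≤ hessForm Γ (z, w) v := by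
  have hpair := norm_monomialDeriv_sq_add_le_hessForm hP hQ hPQ (z, w) v
  -- rescaling `df_q` by `zw` clears the exponents `q.1 - 1`, `q.2 - 1`
  have hL := norm_det_sq_mul_le (z ^ P.1 * w ^ P.2 * (P.1 * w)) (z ^ P.1 * w ^ P.2 * (P.2 * z))
    (z ^ Q.1 * w ^ Q.2 * (Q.1 * w)) (z ^ Q.1 * w ^ Q.2 * (Q.2 * z)) v.1 v.2
  have hdet : z ^ P.1 * w ^ P.2 * (P.1 * w) * (z ^ Q.1 * w ^ Q.2 * (Q.2 * z))
      - z ^ P.1 * w ^ P.2 * (P.2 * z) * (z ^ Q.1 * w ^ Q.2 * (Q.1 * w))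
      = z ^ P.1 * w ^ P.2 * (z ^ Q.1 * w ^ Q.2) * (z * w)
        * (((P.1 : ℝ) * Q.2 - P.2 * Q.1 : ℝ) : ℂ) := by
    push_cast; ring
  simp only [← mul_monomialDeriv, hdet, norm_mul, norm_pow, Complex.norm_natCast,
    Complex.norm_real, Real.norm_eq_abs, mul_pow, sq_abs] at hL
  have hhess : 0 ≤ hessForm Γ (z, w) v := hessForm_eq_sum Γ (z, w) v ▸ by positivity
  have hst : 0 < ‖z‖ ^ 2 * ‖w‖ ^ 2 := by positivity
  simp only [pairBound, pow_mul']
  set tr := (‖z‖ ^ P.1) ^ 2 * (‖w‖ ^ P.2) ^ 2 * ((P.1 : ℝ) ^ 2 * ‖w‖ ^ 2 + P.2 ^ 2 * ‖z‖ ^ 2)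
    + (‖z‖ ^ Q.1) ^ 2 * (‖w‖ ^ Q.2) ^ 2 * ((Q.1 : ℝ) ^ 2 * ‖w‖ ^ 2 + Q.2 ^ 2 * ‖z‖ ^ 2)
  rcases (show 0 ≤ tr by positivity).eq_or_lt with h0 | hpos
  · rwa [← h0, div_zero, zero_mul]
  rw [div_mul_eq_mul_div, div_le_iff₀ hpos]
  nlinarith [mul_le_mul_of_nonneg_left hpair (mul_nonneg hpos.le hst.le)]

/-- Weighted AM–GM in multiplicative form: `A/m + B/n = 1`. -/
lemma pow_mul_pow_le_max {s t : ℝ} (hs : 0 ≤ s) (ht : 0 ≤ t) {m n A B : ℕ} (hm : 1 ≤ m)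
    (hn : 1 ≤ n) (hline : n * A + m * B = n * m) : s ^ A * t ^ B ≤ max (s ^ m) (t ^ n) := by
  have hM : 0 ≤ max (s ^ m) (t ^ n) := le_max_of_le_left (by positivity)
  refine le_of_pow_le_pow_left₀ (n := n * m) (by positivity) hM ?_
  calc (s ^ A * t ^ B) ^ (n * m) = (s ^ m) ^ (n * A) * (t ^ n) ^ (m * B) := by ring
    _ ≤ max (s ^ m) (t ^ n) ^ (n * A) * max (s ^ m) (t ^ n) ^ (m * B) := by
      gcongr
      exacts [le_max_left _ _, le_max_right _ _]
    _ = max (s ^ m) (t ^ n) ^ (n * m) := by rw [← pow_add, hline]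

lemma sq_le_pow_two_mul {x y : ℝ} (hx : 0 ≤ x) {k : ℕ} (h : x ≤ y ^ k) : x ^ 2 ≤ y ^ (2 * k) := by
  rw [pow_mul']
  exact pow_le_pow_left₀ hx h 2

lemma sq_div_three_le_pairBound_vertex_mixed {s t u : ℝ} (hs : 0 < s) (ht : 0 < t) {m A B : ℕ}
    (hm : 1 ≤ m) (hAm : A ≤ m) (hB : 1 ≤ B) (hsq : (u * t) ^ 2 ≤ s ^ (2 * A) * t ^ (2 * B))
    (hut : u * t ≤ s ^ m) (hus : u * s ≤ s ^ m) (hu : 0 ≤ u) :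
    u ^ 2 / 3 ≤ pairBound (m, 0) (A, B) s t := by
  simp only [pairBound, Nat.cast_zero, mul_zero, pow_zero, mul_one, zero_mul, sub_zero,
    ne_eq, OfNat.ofNat_ne_zero, not_false_eq_true, zero_pow, add_zero]
  set V := s ^ (2 * m)
  set U := s ^ (2 * A) * t ^ (2 * B)
  have hB1 : (1 : ℝ) ≤ B := by exact_mod_cast hB
  have hAm' : (A : ℝ) ≤ m := by exact_mod_cast hAm
  have h₁ : (u * t) ^ 2 * (m ^ 2 * V) ≤ (m * B) ^ 2 * V * U :=
    calc (u * t) ^ 2 * (m ^ 2 * V) ≤ U * (m ^ 2 * V) * 1 := by rw [mul_one]; gcongr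
      _ ≤ U * (m ^ 2 * V) * B ^ 2 := by gcongr; exact one_le_pow₀ hB1
      _ = (m * B) ^ 2 * V * U := by ring
  have h₂ : (u * t) ^ 2 * (A ^ 2 * U) ≤ (m * B) ^ 2 * V * U :=
    calc (u * t) ^ 2 * (A ^ 2 * U) ≤ V * (m ^ 2 * U) * 1 := by
          rw [mul_one]; gcongr; exact sq_le_pow_two_mul (by positivity) hut
      _ ≤ V * (m ^ 2 * U) * B ^ 2 := by gcongr; exact one_le_pow₀ hB1
      _ = (m * B) ^ 2 * V * U := by ring
  have h₃ : (u * s) ^ 2 * (B ^ 2 * U) ≤ (m * B) ^ 2 * V * U :=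
    calc (u * s) ^ 2 * (B ^ 2 * U) ≤ V * (B ^ 2 * U) * 1 := by
          rw [mul_one]; gcongr; exact sq_le_pow_two_mul (by positivity) hus
      _ ≤ V * (B ^ 2 * U) * m ^ 2 := by gcongr; exact one_le_pow₀ (by exact_mod_cast hm)
      _ = (m * B) ^ 2 * V * U := by ring
  rw [div_le_div_iff₀ (by norm_num) (by positivity)]
  linarith

lemma sq_div_three_le_pairBound_vertices {s t u : ℝ} (hs : 0 < s) (ht : 0 < t) {m n : ℕ}
    (hm : 1 ≤ m) (hn : 1 ≤ n) (hut : u * t ≤ t ^ n) (hus : u * s ≤ s ^ m) (hu : 0 ≤ u) :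
    u ^ 2 / 3 ≤ pairBound (m, 0) (0, n) s t := by
  simp only [pairBound, Nat.cast_zero, mul_zero, pow_zero, mul_one, zero_mul, sub_zero,
    ne_eq, OfNat.ofNat_ne_zero, not_false_eq_true, zero_pow, add_zero, one_mul, zero_add]
  set V := s ^ (2 * m)
  set W := t ^ (2 * n)
  have hm1 : (1 : ℝ) ≤ m := by exact_mod_cast hm
  have hn1 : (1 : ℝ) ≤ n := by exact_mod_cast hn
  have h₁ : (u * t) ^ 2 * (m ^ 2 * V) ≤ (m * n) ^ 2 * V * W :=
    calc (u * t) ^ 2 * (m ^ 2 * V) ≤ W * (m ^ 2 * V) * 1 := by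
          rw [mul_one]; gcongr; exact sq_le_pow_two_mul (by positivity) hut
      _ ≤ W * (m ^ 2 * V) * n ^ 2 := by gcongr; exact one_le_pow₀ hn1
      _ = (m * n) ^ 2 * V * W := by ring
  have h₂ : (u * s) ^ 2 * (n ^ 2 * W) ≤ (m * n) ^ 2 * V * W :=
    calc (u * s) ^ 2 * (n ^ 2 * W) ≤ V * (n ^ 2 * W) * 1 := by
          rw [mul_one]; gcongr; exact sq_le_pow_two_mul (by positivity) hus
      _ ≤ V * (n ^ 2 * W) * m ^ 2 := by gcongr; exact one_le_pow₀ hm1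
      _ = (m * n) ^ 2 * V * W := by ring
  rw [div_le_div_iff₀ (by norm_num) (by positivity)]
  linarith [(by positivity : (0 : ℝ) ≤ (m * n) ^ 2 * V * W)]

lemma sq_div_three_mul_le_hessForm {Γ : Finset (ℕ × ℕ)} {m n A B : ℕ} (hm : (m, 0) ∈ Γ)
    (hn : (0, n) ∈ Γ) (hq : (A, B) ∈ Γ) (hm1 : 1 ≤ m) (hn1 : 1 ≤ n) (hB : 1 ≤ B)
    (hline : n * A + m * B = n * m) {z w : ℂ} (hz : 1 ≤ ‖z‖) (hw : w ≠ 0) {u : ℝ} (hu0 : 0 ≤ u)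
    (hu : u ^ B = ‖z‖ ^ A) (hut : 1 ≤ u * ‖w‖) (v : ℂ × ℂ) :
    u ^ 2 / 3 * (‖v.1‖ ^ 2 + ‖v.2‖ ^ 2) ≤ hessForm Γ (z, w) v := by
  have hz0 : z ≠ 0 := norm_pos_iff.1 (one_pos.trans_le hz)
  have hs := norm_pos_iff.2 hz0
  have ht := norm_pos_iff.2 hw
  have hAm : A < m := by nlinarith
  have hus : u * ‖z‖ ≤ ‖z‖ ^ m := by
    refine le_of_pow_le_pow_left₀ (n := B) (by omega) (by positivity) ?_
    calc (u * ‖z‖) ^ B = ‖z‖ ^ (A + B) := by rw [mul_pow, hu, pow_add]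
      _ ≤ ‖z‖ ^ (m * B) := pow_le_pow_right₀ hz (by nlinarith)
      _ = (‖z‖ ^ m) ^ B := pow_mul _ _ _
  have hut2 : (u * ‖w‖) ^ 2 ≤ ‖z‖ ^ (2 * A) * ‖w‖ ^ (2 * B) :=
    calc (u * ‖w‖) ^ 2 ≤ (u * ‖w‖) ^ (2 * B) := pow_le_pow_right₀ hut (by omega)
      _ = ‖z‖ ^ (2 * A) * ‖w‖ ^ (2 * B) := by rw [pow_mul', mul_pow, hu]; ring
  have hmax : u * ‖w‖ ≤ max (‖z‖ ^ m) (‖w‖ ^ n) := by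
    have hM : 1 ≤ max (‖z‖ ^ m) (‖w‖ ^ n) := le_max_of_le_left (one_le_pow₀ hz)
    refine le_of_pow_le_pow_left₀ (n := B) (by omega) (by positivity) ?_
    calc (u * ‖w‖) ^ B = ‖z‖ ^ A * ‖w‖ ^ B := by rw [mul_pow, hu]
      _ ≤ max (‖z‖ ^ m) (‖w‖ ^ n) := pow_mul_pow_le_max hs.le ht.le hm1 hn1 hline
      _ ≤ max (‖z‖ ^ m) (‖w‖ ^ n) ^ B := le_self_pow₀ hM (by omega)
  rcases le_total (‖w‖ ^ n) (‖z‖ ^ m) with h | h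
  · refine le_trans ?_ (pairBound_mul_le_hessForm hm hq (by simp; omega) hz0 hw v)
    gcongr
    exact sq_div_three_le_pairBound_vertex_mixed hs ht hm1 hAm.le hB hut2
      (max_eq_left h ▸ hmax) hus hu0
  · refine le_trans ?_ (pairBound_mul_le_hessForm hm hn (by simp; omega) hz0 hw v)
    gcongr
    exact sq_div_three_le_pairBound_vertices hs ht hm1 hn1 (max_eq_right h ▸ hmax) hus hu0

lemma rpow_two_mul {x : ℝ} (hx : 0 ≤ x) (y : ℝ) : x ^ (2 * y) = (x ^ y) ^ 2 := by
  rw [← Real.rpow_mul_natCast hx, mul_comm]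
  norm_num

lemma rpow_sq_div_three_mul_le_hessForm {Γ : Finset (ℕ × ℕ)} {m n A B : ℕ} (hm : (m, 0) ∈ Γ)
    (hn : (0, n) ∈ Γ) (hq : (A, B) ∈ Γ) (hm1 : 1 ≤ m) (hn1 : 1 ≤ n) (hB : 1 ≤ B)
    (hline : n * A + m * B = n * m) {σ : ℝ} (hσ : (A : ℝ) = σ * B) {z w : ℂ} (hz : 1 ≤ ‖z‖)
    (hzw : 1 ≤ ‖z‖ ^ σ * ‖w‖) (v : ℂ × ℂ) :
    (‖z‖ ^ σ) ^ 2 / 3 * (‖v.1‖ ^ 2 + ‖v.2‖ ^ 2) ≤ hessForm Γ (z, w) v := by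
  have hw : w ≠ 0 := by rintro rfl; norm_num at hzw
  refine sq_div_three_mul_le_hessForm hm hn hq hm1 hn1 hB hline hz hw (by positivity) ?_ hzw v
  rw [← Real.rpow_mul_natCast (norm_nonneg z), ← hσ, Real.rpow_natCast]

lemma one_le_and_one_le_rpow_mul_of_le {s t σ τ : ℝ} (hs : 0 ≤ s) (hσ : 0 < σ) (hτ : 0 ≤ τ)
    (hE : (1 ≤ s ∧ s ^ (-σ) ≤ t) ∨ (1 ≤ t ∧ t ^ (-τ) ≤ s)) (hle : t ^ τ ≤ s ^ σ) :
    1 ≤ s ∧ 1 ≤ s ^ σ * t := by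
  rcases hE with ⟨hs1, hst⟩ | ⟨ht1, hts⟩
  · refine ⟨hs1, ?_⟩
    calc (1 : ℝ) = s ^ σ * s ^ (-σ) := by rw [← Real.rpow_add (by linarith)]; simp
      _ ≤ s ^ σ * t := by gcongr
  · have hsσ : 1 ≤ s ^ σ := (Real.one_le_rpow ht1 hτ).trans hle
    have hs1 : 1 ≤ s := le_of_not_gt fun h => (Real.rpow_lt_one hs h hσ).not_ge hsσ
    exact ⟨hs1, one_le_mul_of_one_le_of_one_le hsσ ht1⟩

theorem lambda_lower_bound_homogeneous_general (Γ : Finset (ℕ × ℕ)) (m n : ℕ)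
    (hm : (m, 0) ∈ Γ) (hn : (0, n) ∈ Γ) (hm1 : 1 ≤ m) (hn1 : 1 ≤ n)
    (hhom : ∀ q ∈ Γ, n * q.1 + m * q.2 = n * m)
    (σ τ : ℝ)
    (hσatt : ∃ q ∈ Γ, q.1 ≠ 0 ∧ q.2 ≠ 0 ∧ (q.1 : ℝ) = σ * q.2)
    (hτatt : ∃ q ∈ Γ, q.1 ≠ 0 ∧ q.2 ≠ 0 ∧ (q.2 : ℝ) = τ * q.1) :
    ∃ c : ℝ, 0 < c ∧ ∀ z w : ℂ,
      ((1 ≤ ‖z‖ ∧ ‖z‖ ^ (-σ) ≤ ‖w‖) ∨ (1 ≤ ‖w‖ ∧ ‖w‖ ^ (-τ) ≤ ‖z‖)) →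
      c * (‖z‖ ^ (2 * σ) + ‖w‖ ^ (2 * τ)) ≤ lamGamma Γ (z, w) := by
  obtain ⟨⟨A, B⟩, hq, hA, hB, hσ⟩ := hσatt
  obtain ⟨⟨A', B'⟩, hq', hA', hB', hτ⟩ := hτatt
  have hσ0 : 0 < σ := pos_of_mul_pos_left (hσ ▸ by positivity) (Nat.cast_nonneg B)
  have hτ0 : 0 < τ := pos_of_mul_pos_left (hτ ▸ by positivity) (Nat.cast_nonneg A')
  refine ⟨1 / 6, by norm_num, fun z w hE => le_lamGamma_of_forall fun v => ?_⟩
  rw [rpow_two_mul (norm_nonneg z), rpow_two_mul (norm_nonneg w)]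
  rcases le_total (‖w‖ ^ τ) (‖z‖ ^ σ) with h | h
  · obtain ⟨hz, hzw⟩ := one_le_and_one_le_rpow_mul_of_le (norm_nonneg z) hσ0 hτ0.le hE h
    refine le_trans ?_ (rpow_sq_div_three_mul_le_hessForm hm hn hq hm1 hn1 (by omega)
      (hhom _ hq) hσ hz hzw v)
    have := pow_le_pow_left₀ (by positivity) h 2
    gcongr
    linarith
  · obtain ⟨hw, hwz⟩ := one_le_and_one_le_rpow_mul_of_le (norm_nonneg w) hτ0 hσ0.le hE.symm h
    have key := rpow_sq_div_three_mul_le_hessForm (Finset.mem_image_of_mem Prod.swap hn)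
      (Finset.mem_image_of_mem Prod.swap hm) (Finset.mem_image_of_mem Prod.swap hq') hn1 hm1
      (by omega) (by linarith [hhom _ hq']) hτ hw hwz v.swap
    rw [hessForm_image_swap Γ z w v] at key
    refine le_trans ?_ key
    have := pow_le_pow_left₀ (by positivity) h 2
    simp only [Prod.fst_swap, Prod.snd_swap]
    rw [add_comm (‖v.2‖ ^ 2)]
    gcongr
    linarith

/-- For a non-decoupled homogeneous model monomial weight, the least eigenvalue `λ_Γ` of
the complex Hessian satisfies `λ_Γ(z,w) ≳ |z|^{2σ} + |w|^{2τ}` on the region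
`E = {|z| ≥ 1, |w| ≥ |z|^{-σ}} ∪ {|w| ≥ 1, |z| ≥ |w|^{-τ}}`, where `σ = max α/β` and
`τ = max β/α` over mixed points of `Γ`. -/
theorem lambda_lower_bound_homogeneous (Γ : Finset (ℕ × ℕ)) (m n : ℕ)
    (hm : (m, 0) ∈ Γ) (hn : (0, n) ∈ Γ) (hm1 : 1 ≤ m) (hn1 : 1 ≤ n)
    (hhom : ∀ q ∈ Γ, n * q.1 + m * q.2 = n * m)
    (σ τ : ℝ)
    (hσub : ∀ q ∈ Γ, q.1 ≠ 0 → q.2 ≠ 0 → (q.1 : ℝ) ≤ σ * q.2)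
    (hσatt : ∃ q ∈ Γ, q.1 ≠ 0 ∧ q.2 ≠ 0 ∧ (q.1 : ℝ) = σ * q.2)
    (hτub : ∀ q ∈ Γ, q.1 ≠ 0 → q.2 ≠ 0 → (q.2 : ℝ) ≤ τ * q.1)
    (hτatt : ∃ q ∈ Γ, q.1 ≠ 0 ∧ q.2 ≠ 0 ∧ (q.2 : ℝ) = τ * q.1) :
    ∃ c : ℝ, 0 < c ∧ ∀ z w : ℂ,
      ((1 ≤ ‖z‖ ∧ ‖z‖ ^ (-σ) ≤ ‖w‖) ∨ (1 ≤ ‖w‖ ∧ ‖w‖ ^ (-τ) ≤ ‖z‖)) →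
      c * (‖z‖ ^ (2 * σ) + ‖w‖ ^ (2 * τ)) ≤ lamGamma Γ (z, w) :=
  lambda_lower_bound_homogeneous_general Γ m n hm hn hm1 hn1 hhom σ τ hσatt hτatt
end
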